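/- Let ψ, ψ' : Θ → (S → ℝ≥0) be two signaling schemes (probability distributions over S for each state), p ∈ Δ(Θ) a prior, and suppose ‖ψ(·|θ) − ψ'(·|θ)‖_∞ ≤ ε/p(θ) for all θ with p(θ) > 0. Let u : A × Θ → [0,1] and let ξ : S^n → Δ(A) be any mechanism. Then |∑_θ p(θ) ∑_{𝐬∈S^n, a∈A} ξ(𝐬)(a) u(a,θ) ∏_i ψ(s_i|θ) − ∑_θ p(θ) ∑_{𝐬,a} ξ(𝐬)(a) u(a,θ) ∏_i ψ'(s_i|θ)| ≤ n·|S|·|Θ|·ε. -/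

import Mathlib

/-!
For a fixed state θ the two expected utilities differ by a weighted sum of the differences of the
product measures `ψ(·|θ)^⊗n` and `ψ'(·|θ)^⊗n`, with weights `∑ₐ ξ(𝐬)(a) u(a,θ) ∈ [0, 1]`, so it
is bounded by the ℓ¹ distance of the product measures. Replacing one factor at a time (a hybrid
argument) bounds that distance by `n` times the ℓ¹ distance `∑ₛ |ψ(s|θ) - ψ'(s|θ)| ≤ |S| ε / p(θ)`.
Weighting by `p(θ)` and summing over `θ` gives `n |S| |Θ| ε`.
-/

open Finset

section ProductMeasure

variable {S : Type*} [Fintype S]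

lemma sum_pi_prod_eq_one (n : ℕ) {g : S → ℝ} (hg : ∑ s, g s = 1) :
    ∑ σ : Fin n → S, ∏ i, g (σ i) = 1 := by
  classical
  rw [← Fintype.prod_sum fun (_ : Fin n) s => g s, hg, prod_const_one]

lemma sum_pi_fin_succ {M : Type*} [AddCommMonoid M] (n : ℕ) (F : (Fin (n + 1) → S) → M) :
    ∑ σ, F σ = ∑ s, ∑ τ : Fin n → S, F (Fin.cons s τ) := by
  rw [← Equiv.sum_comp (Fin.consEquiv fun _ => S), Fintype.sum_prod_type]
  rfl

lemma abs_mul_sub_mul_le {a b c d : ℝ} (ha : 0 ≤ a) (hd : 0 ≤ d) :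
    |a * b - c * d| ≤ a * |b - d| + |a - c| * d := by
  calc |a * b - c * d| = |a * (b - d) + (a - c) * d| := by congr 1; ring
    _ ≤ |a * (b - d)| + |(a - c) * d| := abs_add_le _ _
    _ = a * |b - d| + |a - c| * d := by rw [abs_mul, abs_mul, abs_of_nonneg ha, abs_of_nonneg hd]

lemma sum_abs_pi_prod_sub_le {f g : S → ℝ} (hf0 : ∀ s, 0 ≤ f s) (hf1 : ∑ s, f s = 1)
    (hg0 : ∀ s, 0 ≤ g s) (hg1 : ∑ s, g s = 1) (n : ℕ) :
    ∑ σ : Fin n → S, |∏ i, f (σ i) - ∏ i, g (σ i)| ≤ n * ∑ s, |f s - g s| := by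
  induction n with
  | zero => simp
  | succ n ih =>
    set D := ∑ τ : Fin n → S, |∏ i, f (τ i) - ∏ i, g (τ i)|
    set d := ∑ s, |f s - g s|
    rw [sum_pi_fin_succ]
    simp only [Fin.prod_univ_succ, Fin.cons_zero, Fin.cons_succ]
    calc ∑ s, ∑ τ : Fin n → S, |f s * ∏ i, f (τ i) - g s * ∏ i, g (τ i)|
        ≤ ∑ s, ∑ τ : Fin n → S,
            (f s * |∏ i, f (τ i) - ∏ i, g (τ i)| + |f s - g s| * ∏ i, g (τ i)) :=
          sum_le_sum fun s _ => sum_le_sum fun τ _ =>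
            abs_mul_sub_mul_le (hf0 s) (prod_nonneg fun i _ => hg0 (τ i))
      _ = (∑ s, f s) * D + d * ∑ τ : Fin n → S, ∏ i, g (τ i) := by
          simp only [sum_add_distrib, ← sum_mul_sum, D, d]
      _ ≤ (n + 1 : ℕ) * d := by
          rw [hf1, sum_pi_prod_eq_one n hg1]
          push_cast
          linarith

end ProductMeasure

lemma abs_sum_mul_le_sum_abs {ι : Type*} (s : Finset ι) {w x : ι → ℝ}
    (hw0 : ∀ i, 0 ≤ w i) (hw1 : ∀ i, w i ≤ 1) :
    |∑ i ∈ s, w i * x i| ≤ ∑ i ∈ s, |x i| :=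
  (abs_sum_le_sum_abs _ _).trans <| sum_le_sum fun i _ => by
    rw [abs_mul, abs_of_nonneg (hw0 i)]
    exact mul_le_of_le_one_left (abs_nonneg _) (hw1 i)

lemma sum_mul_le_one {A : Type*} [Fintype A] {ξ v : A → ℝ} (hξ0 : ∀ a, 0 ≤ ξ a)
    (hξ1 : ∑ a, ξ a = 1) (hv1 : ∀ a, v a ≤ 1) : ∑ a, ξ a * v a ≤ 1 :=
  hξ1 ▸ sum_le_sum fun a _ => mul_le_of_le_one_right (hξ0 a) (hv1 a)

lemma abs_sum_pi_prod_sub_le {S A : Type*} [Fintype S] [Fintype A] {n : ℕ}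
    {ξ : (Fin n → S) → A → ℝ} (hξ0 : ∀ σ a, 0 ≤ ξ σ a) (hξ1 : ∀ σ, ∑ a, ξ σ a = 1)
    {v : A → ℝ} (hv0 : ∀ a, 0 ≤ v a) (hv1 : ∀ a, v a ≤ 1)
    {f g : S → ℝ} (hf0 : ∀ s, 0 ≤ f s) (hf1 : ∑ s, f s = 1)
    (hg0 : ∀ s, 0 ≤ g s) (hg1 : ∑ s, g s = 1) {δ : ℝ} (hδ : ∀ s, |f s - g s| ≤ δ) :
    |∑ σ : Fin n → S, ∑ a, ξ σ a * v a * ∏ i, f (σ i)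
      - ∑ σ : Fin n → S, ∑ a, ξ σ a * v a * ∏ i, g (σ i)| ≤ n * Fintype.card S * δ := by
  calc _ = |∑ σ : Fin n → S, (∑ a, ξ σ a * v a) * (∏ i, f (σ i) - ∏ i, g (σ i))| := by
        simp only [← sum_sub_distrib, ← mul_sub, sum_mul]
    _ ≤ ∑ σ : Fin n → S, |∏ i, f (σ i) - ∏ i, g (σ i)| :=
        abs_sum_mul_le_sum_abs _ (fun σ => sum_nonneg fun a _ => mul_nonneg (hξ0 σ a) (hv0 a))
          (fun σ => sum_mul_le_one (hξ0 σ) (hξ1 σ) hv1)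
    _ ≤ n * ∑ s, |f s - g s| := sum_abs_pi_prod_sub_le hf0 hf1 hg0 hg1 n
    _ ≤ n * ∑ _s : S, δ := by gcongr with s; exact hδ s
    _ = n * Fintype.card S * δ := by rw [sum_const, card_univ, nsmul_eq_mul, mul_assoc]

lemma mul_abs_le_of_abs_le_div {p c d : ℝ} (hp : 0 ≤ p) (hc : 0 ≤ c)
    (hd : 0 < p → |d| ≤ c / p) : p * |d| ≤ c := by
  rcases hp.eq_or_lt with rfl | hp
  · simpa using hc
  · simpa [mul_comm] using (le_div_iff₀ hp).mp (hd hp)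

theorem stmt_10 {Θ S A : Type*} [Fintype Θ] [Fintype S] [Fintype A] (n : ℕ)
    (p : Θ → ℝ) (hp0 : ∀ θ, 0 ≤ p θ) (hp1 : ∑ θ : Θ, p θ = 1)
    (ψ ψ' : Θ → S → ℝ)
    (hψ0 : ∀ θ s, 0 ≤ ψ θ s) (hψ1 : ∀ θ, ∑ s : S, ψ θ s = 1)
    (hψ'0 : ∀ θ s, 0 ≤ ψ' θ s) (hψ'1 : ∀ θ, ∑ s : S, ψ' θ s = 1)
    (ε : ℝ)
    (hclose : ∀ θ, 0 < p θ → ∀ s, |ψ θ s - ψ' θ s| ≤ ε / p θ)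
    (u : A → Θ → ℝ) (hu0 : ∀ a θ, 0 ≤ u a θ) (hu1 : ∀ a θ, u a θ ≤ 1)
    (ξ : (Fin n → S) → A → ℝ) (hξ0 : ∀ σ a, 0 ≤ ξ σ a) (hξ1 : ∀ σ, ∑ a : A, ξ σ a = 1) :
    |(∑ θ : Θ, p θ * ∑ σ : Fin n → S, ∑ a : A, ξ σ a * u a θ * ∏ i, ψ θ (σ i))
      - ∑ θ : Θ, p θ * ∑ σ : Fin n → S, ∑ a : A, ξ σ a * u a θ * ∏ i, ψ' θ (σ i)|
      ≤ n * (Fintype.card S) * (Fintype.card Θ) * ε := by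
  have hε : 0 ≤ ε := by
    obtain ⟨θ, -, hθ⟩ := exists_lt_of_sum_lt (s := univ) (f := 0) (g := p) (by simp [hp1])
    obtain ⟨s, -⟩ := nonempty_of_sum_ne_zero (by simp [hψ1 θ] : ∑ s, ψ θ s ≠ 0)
    simpa using (le_div_iff₀ hθ).mp ((abs_nonneg _).trans (hclose θ hθ s))
  have hstate : ∀ θ, |p θ * ∑ σ : Fin n → S, ∑ a, ξ σ a * u a θ * ∏ i, ψ θ (σ i)
      - p θ * ∑ σ : Fin n → S, ∑ a, ξ σ a * u a θ * ∏ i, ψ' θ (σ i)|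
      ≤ n * Fintype.card S * ε := fun θ => by
    rw [← mul_sub, abs_mul, abs_of_nonneg (hp0 θ)]
    refine mul_abs_le_of_abs_le_div (hp0 θ) (by positivity) fun hθ => ?_
    rw [mul_div_assoc]
    exact abs_sum_pi_prod_sub_le hξ0 hξ1 (hu0 · θ) (hu1 · θ) (hψ0 θ) (hψ1 θ) (hψ'0 θ) (hψ'1 θ)
      (hclose θ hθ)
  calc _ ≤ ∑ θ, |p θ * ∑ σ : Fin n → S, ∑ a, ξ σ a * u a θ * ∏ i, ψ θ (σ i)
        - p θ * ∑ σ : Fin n → S, ∑ a, ξ σ a * u a θ * ∏ i, ψ' θ (σ i)| := by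
        rw [← sum_sub_distrib]; exact abs_sum_le_sum_abs _ _
    _ ≤ ∑ _θ : Θ, n * Fintype.card S * ε := sum_le_sum fun θ _ => hstate θ
    _ = n * Fintype.card S * Fintype.card Θ * ε := by
        rw [sum_const, card_univ, nsmul_eq_mul]; ring
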